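/- For a subset Y of X and a natural number n, Y is n-thin if and only if |Δ_p(Y)| ≤ n for every p ∈ X^#. -/

import Mathlib

open Metric Bornology Set

variable {X : Type*} [MetricSpace X]

/-- `B(A,r) = ⋃_{a∈A} B(a,r)` where `B(a,r)` is the closed ball of radius `r`. -/
def ballU (A : Set X) (r : ℝ) : Set X := ⋃ a ∈ A, Metric.closedBall a r

/-- `X^#`: the set of ultrafilters on `X` all of whose members are unbounded. -/
def sharp (X : Type*) [MetricSpace X] : Set (Ultrafilter X) :=
  {p | ∀ P ∈ p, ¬ Bornology.IsBounded P}

/-- Parallelity: `p ∥ q` iff there is `r ≥ 0` with `B(Q,r) ∈ p` for every `Q ∈ q`. -/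
def Par (p q : Ultrafilter X) : Prop :=
  ∃ r : ℝ, 0 ≤ r ∧ ∀ Q ∈ q, ballU Q r ∈ p

/-- `p̆ = {q ∈ X^# : q ∥ p}`. -/
def pbreve (p : Ultrafilter X) : Set (Ultrafilter X) :=
  {q | q ∈ sharp X ∧ Par q p}

/-- The `p`-companion `Δ_p(Y) = {q ∈ X^# : Y ∈ q, q ∥ p}`. -/
def Delta (p : Ultrafilter X) (Y : Set X) : Set (Ultrafilter X) :=
  {q | q ∈ sharp X ∧ Y ∈ q ∧ Par q p}

/-- A set `S ⊆ X^#` is invariant if `p ∈ S`, `q ∈ X^#`, `q ∥ p` imply `q ∈ S`. -/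
def Invt (S : Set (Ultrafilter X)) : Prop :=
  ∀ p ∈ S, ∀ q, q ∈ sharp X → Par q p → q ∈ S

/-- `Y` is large if `X = B(Y,r)` for some `r ≥ 0`. -/
def Large (Y : Set X) : Prop := ∃ r : ℝ, 0 ≤ r ∧ ballU Y r = Set.univ

/-- `Y` is thick if for every `r ≥ 0` there is `y ∈ Y` with `B(y,r) ⊆ Y`. -/
def Thick (Y : Set X) : Prop := ∀ r : ℝ, 0 ≤ r → ∃ y ∈ Y, Metric.closedBall y r ⊆ Y

/-- `Y` is prethick if `B(Y,r)` is thick for some `r ≥ 0`. -/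
def Prethick (Y : Set X) : Prop := ∃ r : ℝ, 0 ≤ r ∧ Thick (ballU Y r)

/-- `Y` is small if `(X∖Y) ∩ L` is large for every large `L`. -/
def SmallSet (Y : Set X) : Prop := ∀ L : Set X, Large L → Large (Yᶜ ∩ L)

/-- `Y` is thin if for each `r ≥ 0` there is a bounded `V` with
`B(y,r) ∩ Y = {y}` for all `y ∈ Y∖V`. -/
def Thin (Y : Set X) : Prop :=
  ∀ r : ℝ, 0 ≤ r → ∃ V : Set X, Bornology.IsBounded V ∧
    ∀ y ∈ Y \ V, Metric.closedBall y r ∩ Y = {y}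

/-- `Y` is `n`-thin if for each `r ≥ 0` there is a bounded `V` with
`|B(y,r) ∩ Y| ≤ n` for all `y ∈ Y∖V`. -/
def NThin (n : ℕ) (Y : Set X) : Prop :=
  ∀ r : ℝ, 0 ≤ r → ∃ V : Set X, Bornology.IsBounded V ∧
    ∀ y ∈ Y \ V, (Metric.closedBall y r ∩ Y).encard ≤ n

/-- `M` is a minimal nonempty closed invariant subset of `X^#`
(closures/closedness taken in the Stone topology on ultrafilters). -/
def MinCI (M : Set (Ultrafilter X)) : Prop :=
  M ⊆ sharp X ∧ M.Nonempty ∧ IsClosed M ∧ Invt M ∧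
    ∀ S ⊆ M, S.Nonempty → IsClosed S → Invt S → S = M

/-! If `q₀, …, qₙ` are distinct members of `Δ_p(Y)`, separate them by disjoint sets `Zᵢ ⊆ Y`.
Each `qᵢ` is parallel to `p`, so the sets `B(Zᵢ, R)` all belong to `p` for a common `R`, and
arbitrarily far out there is a point within `R` of every `Zᵢ`: this gives `n + 1` points of `Y`
in a ball of radius `2R`, which is impossible far out when `Y` is `n`-thin.
Conversely, if `Y` is not `n`-thin at radius `r`, choose centres `xₖ → ∞`, more than `2r` apart,
each with `n + 1` points of `Y` in `B(xₖ, r)`. Along a free ultrafilter on `ℕ` the centres give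
`p ∈ X^#` and the `i`-th points give `n + 1` ultrafilters in `Δ_p(Y)`, distinct because the balls
`B(xₖ, r)` are disjoint. -/

open Filter Function

lemma exists_injective_fin_of_lt_encard {α : Type*} {s : Set α} {n : ℕ}
    (h : (n : ℕ∞) < s.encard) : ∃ f : Fin (n + 1) → α, Injective f ∧ ∀ i, f i ∈ s := by
  obtain ⟨t, hts, ht⟩ := exists_subset_encard_eq (Order.add_one_le_of_lt h)
  have : Finite t := (finite_of_encard_eq_coe (k := n + 1) ht).to_subtype
  have hcard : Nat.card t = n + 1 := by
    have := ENat.card_eq_coe_natCard t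
    rw [ENat.card_coe_set_eq, ht] at this
    exact_mod_cast this.symm
  let e := ((Finite.equivFin t).trans (finCongr hcard)).symm
  exact ⟨fun i => e i, Subtype.val_injective.comp e.injective, fun i => hts (e i).2⟩

lemma encard_le_of_injective {α ι : Type*} {s : Set α} {n : ℕ∞} {f : ι → α}
    (hf : Injective f) (hfs : ∀ i, f i ∈ s) (hs : s.encard ≤ n) : ENat.card ι ≤ n :=
  hf.encard_range.trans <| (encard_mono (range_subset_iff.2 hfs)).trans hs

lemma Ultrafilter.map_ne_map_of_forall_ne {α ι : Type*} {F : Ultrafilter ι} {f g : ι → α}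
    (h : ∀ k l, f k ≠ g l) : F.map f ≠ F.map g := by
  intro hfg
  have hf : range f ∈ F.map g := hfg ▸ Ultrafilter.mem_map.2 (univ_mem' mem_range_self)
  have hempty : g ⁻¹' range f = ∅ :=
    eq_empty_iff_forall_notMem.2 fun l ⟨k, hk⟩ => h k l hk
  exact F.empty_notMem (hempty ▸ Ultrafilter.mem_map.1 hf)

lemma Ultrafilter.exists_pairwise_disjoint_mem {α ι : Type*} [Finite ι] {q : ι → Ultrafilter α}
    (hq : Injective q) : ∃ Z : ι → Set α, (∀ i, Z i ∈ q i) ∧ Pairwise (Disjoint on Z) :=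
  Pairwise.exists_mem_filter_of_disjoint fun _ _ hij =>
    Ultrafilter.disjoint_iff_not_le.2 fun hle => hij (hq (Ultrafilter.coe_le_coe.1 hle))

lemma mem_ballU {A : Set X} {r : ℝ} {x : X} : x ∈ ballU A r ↔ ∃ a ∈ A, dist x a ≤ r := by
  simp [ballU]

lemma ballU_mono {A : Set X} {r s : ℝ} (h : r ≤ s) : ballU A r ⊆ ballU A s :=
  biUnion_mono subset_rfl fun _ _ => closedBall_subset_closedBall h

lemma Bornology.IsBounded.ballU {A : Set X} (hA : IsBounded A) (r : ℝ) :
    IsBounded (ballU A r) :=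
  (hA.cthickening (δ := r)).subset (iUnion₂_subset fun _ ha => closedBall_subset_cthickening ha r)

lemma mem_sharp_iff_le_cobounded {p : Ultrafilter X} : p ∈ sharp X ↔ ↑p ≤ cobounded X := by
  refine ⟨fun hp s hs => ?_, fun hp P hP hPb => ?_⟩
  · by_contra hsp
    exact hp _ (Ultrafilter.compl_mem_iff_notMem.2 hsp) (isBounded_def.2 (by rwa [compl_compl]))
  · exact p.empty_notMem (by simpa using inter_mem hP (hp hPb))

lemma ballU_mem_of_forall_ballU_mem {p q : Ultrafilter X} {r : ℝ}
    (h : ∀ P ∈ p, ballU P r ∈ q) {Q : Set X} (hQ : Q ∈ q) : ballU Q r ∈ p := by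
  by_contra hQp
  have hfar : ballU (ballU Q r)ᶜ r ∈ q := h _ (Ultrafilter.compl_mem_iff_notMem.2 hQp)
  obtain ⟨x, hx, hxQ⟩ := Filter.nonempty_of_mem (inter_mem hfar hQ)
  obtain ⟨a, ha, hax⟩ := mem_ballU.1 hx
  exact ha (mem_ballU.2 ⟨x, hxQ, by rwa [dist_comm]⟩)

lemma mem_sharp_of_par {p q : Ultrafilter X} (hp : p ∈ sharp X) (hqp : Par q p) :
    q ∈ sharp X := by
  obtain ⟨r, -, hr⟩ := hqp
  exact fun Q hQ hQb => hp _ (ballU_mem_of_forall_ballU_mem hr hQ) (hQb.ballU r)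

lemma par_map_of_dist_le {ι : Type*} (F : Ultrafilter ι) {f g : ι → X} {r : ℝ} (hr : 0 ≤ r)
    (h : ∀ k, dist (f k) (g k) ≤ r) : Par (F.map f) (F.map g) := by
  refine ⟨r, hr, fun P hP => ?_⟩
  rw [Ultrafilter.mem_map] at hP ⊢
  exact mem_of_superset hP fun k hk => mem_ballU.2 ⟨g k, hk, h k⟩

lemma exists_cluster_of_ballU_mem {ι : Type*} [Finite ι] {p : Ultrafilter X} (hp : p ∈ sharp X)
    {A : ι → Set X} {R : ℝ} (hA : ∀ i, ballU (A i) R ∈ p) {V : Set X} (hV : IsBounded V) :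
    ∃ y : ι → X, (∀ i, y i ∈ A i) ∧ (∀ i, y i ∉ V) ∧ ∀ i j, dist (y i) (y j) ≤ 2 * R := by
  have hVR : (ballU V R)ᶜ ∈ p := mem_sharp_iff_le_cobounded.1 hp (hV.ballU R)
  obtain ⟨x, hxA, hxV⟩ := Filter.nonempty_of_mem (inter_mem (iInter_mem.2 hA) hVR)
  choose y hyA hxy using fun i => mem_ballU.1 (mem_iInter.1 hxA i)
  refine ⟨y, hyA, fun i hyV => hxV (mem_ballU.2 ⟨y i, hyV, hxy i⟩), fun i j => ?_⟩
  calc dist (y i) (y j) ≤ dist x (y i) + dist x (y j) := dist_triangle_left _ _ _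
    _ ≤ 2 * R := by linarith [hxy i, hxy j]

lemma card_le_of_nthin {Y : Set X} {n : ℕ} (hY : NThin n Y) {p : Ultrafilter X}
    (hp : p ∈ sharp X) {ι : Type*} [Finite ι] {q : ι → Ultrafilter X} (hq : Injective q)
    (hqΔ : ∀ i, q i ∈ Delta p Y) : ENat.card ι ≤ n := by
  rcases isEmpty_or_nonempty ι with hι | ⟨⟨i₀⟩⟩
  · exact (ENat.card_eq_zero_iff_empty ι).2 hι ▸ bot_le
  have := Fintype.ofFinite ι
  obtain ⟨Z, hZq, hZ⟩ := Ultrafilter.exists_pairwise_disjoint_mem hq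
  choose r hr0 hr using fun i => (hqΔ i).2.2
  have hR : ∀ i, r i ≤ ∑ j, r j := fun i =>
    Finset.single_le_sum (fun j _ => hr0 j) (Finset.mem_univ i)
  obtain ⟨V, hVb, hV⟩ := hY (2 * ∑ j, r j) (by linarith [hR i₀, hr0 i₀])
  have hZp : ∀ i, ballU (Z i ∩ Y) (∑ j, r j) ∈ p := fun i =>
    mem_of_superset (ballU_mem_of_forall_ballU_mem (hr i) (inter_mem (hZq i) (hqΔ i).2.1))
      (ballU_mono (hR i))
  obtain ⟨y, hyZ, hyV, hyy⟩ := exists_cluster_of_ballU_mem hp hZp hVb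
  have hyinj : Injective y := fun i j hij =>
    hZ.eq (not_disjoint_iff.2 ⟨y i, (hyZ i).1, hij ▸ (hyZ j).1⟩)
  refine encard_le_of_injective hyinj (fun i => ?_) (hV _ ⟨(hyZ i₀).2, hyV i₀⟩)
  exact ⟨mem_closedBall.2 (hyy i i₀), (hyZ i).2⟩

lemma exists_seq_tendsto_cobounded_separated {S : Set X} (hS : ¬ IsBounded S) (d : ℝ) :
    ∃ x : ℕ → X, (∀ k, x k ∈ S) ∧ Tendsto x atTop (cobounded X) ∧
      Pairwise fun k l => d < dist (x k) (x l) := by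
  obtain ⟨x₀, -⟩ := nonempty_of_not_isBounded hS
  have hfar : ∀ R : ℝ, ∃ y ∈ S, R < dist y x₀ := fun R => by
    by_contra! h
    exact hS (isBounded_closedBall.subset fun y hy => mem_closedBall.2 (h y hy))
  choose g hgS hg using hfar
  let x : ℕ → X := fun k => Nat.rec (g 0) (fun _ y => g (dist y x₀ + |d| + 1)) k
  have hstep : ∀ k, dist (x k) x₀ + |d| + 1 < dist (x (k + 1)) x₀ := fun k => hg _
  have hgap : ∀ l k, l < k → dist (x l) x₀ + |d| + 1 ≤ dist (x k) x₀ := fun l k hlk => by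
    induction k, hlk using Nat.le_induction with
    | base => exact (hstep l).le
    | succ k _ ih => linarith [hstep k, abs_nonneg d]
  have hlin : ∀ k : ℕ, (k : ℝ) ≤ dist (x k) x₀ := fun k => by
    induction k with
    | zero => simp
    | succ k ih => push_cast; linarith [hstep k, abs_nonneg d]
  have hsep : ∀ l k, l < k → d < dist (x l) (x k) := fun l k hlk => by
    linarith [hgap l k hlk, dist_triangle (x k) (x l) x₀, le_abs_self d, dist_comm (x l) (x k)]
  refine ⟨x, fun k => by cases k <;> exact hgS _, ?_, fun l k hlk => ?_⟩
  · rw [← tendsto_dist_right_atTop_iff x₀]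
    exact tendsto_atTop_mono hlin tendsto_natCast_atTop_atTop
  · rcases hlk.lt_or_gt with h | h
    · exact hsep l k h
    · exact dist_comm (x k) (x l) ▸ hsep k l h

lemma exists_delta_of_not_nthin {Y : Set X} {n : ℕ} (hY : ¬ NThin n Y) :
    ∃ p ∈ sharp X, ∃ q : Fin (n + 1) → Ultrafilter X, Injective q ∧ ∀ i, q i ∈ Delta p Y := by
  simp only [NThin, not_forall, not_exists, not_and, not_le] at hY
  obtain ⟨r, hr, hY⟩ := hY
  set S := {y ∈ Y | (n : ℕ∞) < (closedBall y r ∩ Y).encard}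
  have hS : ¬ IsBounded S := fun hSb => by
    obtain ⟨y, ⟨hyY, hyS⟩, hy⟩ := hY S hSb
    exact hyS ⟨hyY, hy⟩
  obtain ⟨x, hxS, hx, hsep⟩ := exists_seq_tendsto_cobounded_separated hS (2 * r)
  choose f hf hfmem using fun k => exists_injective_fin_of_lt_encard (hxS k).2
  have hfx : ∀ k i, dist (f k i) (x k) ≤ r := fun k i => (hfmem k i).1
  have hfne : ∀ {i j}, i ≠ j → ∀ k l, f k i ≠ f l j := by
    intro i j hij k l hkl
    obtain rfl | hkl' := eq_or_ne k l
    · exact hij (hf k hkl)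
    · refine (hsep hkl').not_ge ?_
      calc dist (x k) (x l) ≤ dist (f k i) (x k) + dist (f k i) (x l) := dist_triangle_left _ _ _
        _ ≤ 2 * r := by linarith [hfx k i, hkl ▸ hfx l j]
  set F := hyperfilter ℕ
  have hp : F.map x ∈ sharp X :=
    mem_sharp_iff_le_cobounded.2 (hx.mono_left Nat.hyperfilter_le_atTop)
  have hpar : ∀ i, Par (F.map fun k => f k i) (F.map x) := fun i =>
    par_map_of_dist_le F hr (hfx · i)
  refine ⟨F.map x, hp, fun i => F.map fun k => f k i,
    fun i j hij => by_contra fun h => Ultrafilter.map_ne_map_of_forall_ne (hfne h) hij, fun i => ?_⟩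
  exact ⟨mem_sharp_of_par hp (hpar i),
    Ultrafilter.mem_map.2 (univ_mem' fun k => (hfmem k i).2), hpar i⟩

theorem stmt15_general (Y : Set X) (n : ℕ) :
    NThin n Y ↔ ∀ p ∈ sharp X, (Delta p Y).encard ≤ n := by
  refine ⟨fun hY p hp => ?_, fun h => ?_⟩
  · by_contra! hlt
    obtain ⟨q, hq, hqΔ⟩ := exists_injective_fin_of_lt_encard hlt
    simpa [ENat.add_one_le_iff] using card_le_of_nthin hY hp hq hqΔ
  · by_contra hY
    obtain ⟨p, hp, q, hq, hqΔ⟩ := exists_delta_of_not_nthin hY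
    simpa [ENat.add_one_le_iff] using encard_le_of_injective hq hqΔ (h p hp)

theorem stmt15 (hX : ¬ Bornology.IsBounded (Set.univ : Set X)) (Y : Set X) (n : ℕ) :
    NThin n Y ↔ ∀ p ∈ sharp X, (Delta p Y).encard ≤ n :=
  stmt15_general Y n
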